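/- For all natural numbers x and y, if a x y holds then eqe x y or eqo x y holds. (This is the paper's example sequent a x y ⊢ eqe x y, eqo x y, proved both by a cyclic proof with mutually inductive predicates and by its translated inductive proof.) -/
import Mathlib


mutual
  inductive A : ℕ → ℕ → Prop
    | zero : A 0 0
    | of_b : ∀ x y, B x y → A x (y + 1)
    | of_c : ∀ x y, C x y → A (x + 1) y
  inductive B : ℕ → ℕ → Prop
    | of_a : ∀ x y, A x y → B (x + 1) y
    | of_c : ∀ x y, C x y → B (x + 1 + 1) y
  inductive C : ℕ → ℕ → Prop
    | of_a : ∀ x y, A x y → C x (y + 1)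
    | of_b : ∀ x y, B x y → C x (y + 1 + 1)
end

mutual
  inductive Eqe : ℕ → ℕ → Prop
    | zero : Eqe 0 0
    | succ : ∀ x y, Eqo x y → Eqe (x + 1) (y + 1)
  inductive Eqo : ℕ → ℕ → Prop
    | one : Eqo 1 1
    | succ : ∀ x y, Eqe x y → Eqo (x + 1) (y + 1)
end

lemma a_eq {x y : ℕ} (h : A x y) : x = y := by
  induction h using A.rec (motive_2 := fun x y _ => x = y + 1)
    (motive_3 := fun x y _ => y = x + 1) <;> omega

lemma diag (n : ℕ) : Eqe n n ∨ Eqo n n := by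
  induction n with
  | zero => exact Or.inl Eqe.zero
  | succ k ih =>
    rcases ih with h | h
    · exact Or.inr (Eqo.succ _ _ h)
    · exact Or.inl (Eqe.succ _ _ h)

theorem a_eqe_or_eqo (x y : ℕ) (h : A x y) : Eqe x y ∨ Eqo x y := by
  have := a_eq h
  subst this
  exact diag x
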